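/- Let k and J be integers with k ≥ 2 and 1 ≤ 2^J ≤ P, and let λ be a real number with 1/k < λ ≤ 1. Setting X_j = 2^{-j}·P for nonnegative integers j, one has for all real β: the sum over 0 ≤ j ≤ J of X_j·(1 + X_j^k·|β|)^{-λ} is ≪ P·(1 + P^k·|β|)^{-1/k}, where the implied constant depends only on k and λ. -/

import Mathlib

/-!
Put `c = (1 + P^k |β|)^(-1/k)` and `a = kλ - 1 > 0`. Bounding `(1 + X_j^k |β|)^(-λ)` either by `1`
or, since `2^(-jk) ≤ 1`, by `(2^(-jk) (1 + P^k |β|))^(-λ)`, the `j`-th term is at most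
`P c · min ((2^j c)^a, (2^j c)⁻¹)`. The dyadic sequence `2^j c` crosses `1` only once, so the sum
of these minima is dominated by two geometric series, one on each side of the crossing.
-/

open Finset

lemma geom_sum_le_pow_div_sub_one {x : ℝ} (hx : 1 < x) (n : ℕ) :
    ∑ i ∈ range n, x ^ i ≤ x ^ n / (x - 1) := by
  rw [geom_sum_eq hx.ne']
  exact div_le_div_of_nonneg_right (by linarith) (sub_pos.2 hx).le

section Dyadic

variable {a b c : ℝ}

lemma sum_range_mul_pow_rpow_le (hb : 1 < b) (ha : 0 < a) (hc : 0 < c) {m : ℕ}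
    (hm : ∀ j < m, c * b ^ j ≤ 1) :
    ∑ j ∈ range m, (c * b ^ j) ^ a ≤ b ^ a / (b ^ a - 1) := by
  have hq : 1 < b ^ a := Real.one_lt_rpow hb ha
  cases m with
  | zero => simpa using div_nonneg (by positivity) (sub_pos.2 hq).le
  | succ n =>
    calc ∑ j ∈ range (n + 1), (c * b ^ j) ^ a = c ^ a * ∑ j ∈ range (n + 1), (b ^ a) ^ j := by
          rw [mul_sum]
          refine sum_congr rfl fun j _ => ?_
          rw [Real.mul_rpow hc.le (by positivity), Real.rpow_pow_comm (by positivity)]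
      _ ≤ c ^ a * ((b ^ a) ^ (n + 1) / (b ^ a - 1)) := by
          gcongr
          exact geom_sum_le_pow_div_sub_one hq _
      _ = (c * b ^ n) ^ a * (b ^ a / (b ^ a - 1)) := by
          rw [Real.mul_rpow hc.le (by positivity), ← Real.rpow_pow_comm (by positivity)]
          ring
      _ ≤ b ^ a / (b ^ a - 1) := by
          refine mul_le_of_le_one_left (div_nonneg (by positivity) (sub_pos.2 hq).le) ?_
          exact Real.rpow_le_one (by positivity) (hm n n.lt_succ_self) ha.le

lemma sum_Ico_inv_mul_pow_le (hb : 1 < b) (hc : 0 < c) {m : ℕ} (hm : 1 < c * b ^ m) (n : ℕ) :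
    ∑ j ∈ Ico m n, (c * b ^ j)⁻¹ ≤ b / (b - 1) := by
  have hb0 : 0 < b := one_pos.trans hb
  calc ∑ j ∈ Ico m n, (c * b ^ j)⁻¹ = c⁻¹ * ∑ j ∈ Ico m n, b⁻¹ ^ j := by
        rw [mul_sum]
        simp only [mul_inv, inv_pow]
    _ ≤ c⁻¹ * (b⁻¹ ^ m / (1 - b⁻¹)) := by
        gcongr
        exact geom_sum_Ico_le_of_lt_one (by positivity) (inv_lt_one_of_one_lt₀ hb)
    _ = (c * b ^ m)⁻¹ * (b / (b - 1)) := by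
        have : b - 1 ≠ 0 := (sub_pos.2 hb).ne'
        field_simp
        rw [← mul_pow, one_div_mul_cancel hb0.ne', one_pow]
    _ ≤ b / (b - 1) :=
        mul_le_of_le_one_left (div_nonneg hb0.le (sub_pos.2 hb).le) (inv_le_one_of_one_le₀ hm.le)

lemma sum_range_min_rpow_inv_le (hb : 1 < b) (ha : 0 < a) (hc : 0 < c) (N : ℕ) :
    ∑ j ∈ range N, min ((c * b ^ j) ^ a) (c * b ^ j)⁻¹ ≤ b ^ a / (b ^ a - 1) + b / (b - 1) := by
  classical
  have hex : ∃ m, 1 < c * b ^ m := by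
    obtain ⟨m, hm⟩ := pow_unbounded_of_one_lt c⁻¹ hb
    exact ⟨m, by rwa [inv_lt_iff_one_lt_mul₀ hc, mul_comm] at hm⟩
  set m := Nat.find hex
  have hbefore : ∀ j < m, c * b ^ j ≤ 1 := fun j hj => not_lt.1 (Nat.find_min hex hj)
  have hnonneg : ∀ j, 0 ≤ min ((c * b ^ j) ^ a) (c * b ^ j)⁻¹ := fun j => by positivity
  calc ∑ j ∈ range N, min ((c * b ^ j) ^ a) (c * b ^ j)⁻¹
      ≤ ∑ j ∈ range (m + N), min ((c * b ^ j) ^ a) (c * b ^ j)⁻¹ :=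
        sum_le_sum_of_subset_of_nonneg (range_subset_range.2 (by omega)) fun j _ _ => hnonneg j
    _ = ∑ j ∈ range m, min ((c * b ^ j) ^ a) (c * b ^ j)⁻¹
          + ∑ j ∈ Ico m (m + N), min ((c * b ^ j) ^ a) (c * b ^ j)⁻¹ :=
        (sum_range_add_sum_Ico _ (by omega)).symm
    _ ≤ ∑ j ∈ range m, (c * b ^ j) ^ a + ∑ j ∈ Ico m (m + N), (c * b ^ j)⁻¹ := by
        gcongr with j _ j _
        · exact min_le_left _ _
        · exact min_le_right _ _
    _ ≤ b ^ a / (b ^ a - 1) + b / (b - 1) := by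
        gcongr
        · exact sum_range_mul_pow_rpow_le hb ha hc hbefore
        · exact sum_Ico_inv_mul_pow_le hb hc (Nat.find_spec hex) _

end Dyadic

lemma mul_one_add_pow_mul_rpow_neg_le {k : ℕ} {lam P y c β : ℝ} (hlam : 0 ≤ lam) (hP : 0 ≤ P)
    (hy0 : 0 < y) (hy1 : y ≤ 1) (hc : 0 < c) (hck : (c ^ k)⁻¹ = 1 + P ^ k * |β|) :
    y * P * (1 + (y * P) ^ k * |β|) ^ (-lam) ≤ P * c * min ((c / y) ^ (k * lam - 1)) (c / y)⁻¹ := by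
  have hx : 0 < c / y := div_pos hc hy0
  have hyk : y ^ k ≤ 1 := pow_le_one₀ hy0.le hy1
  have hexpand : (y * P) ^ k * |β| = y ^ k * (P ^ k * |β|) := by ring
  have hbase : 1 ≤ 1 + (y * P) ^ k * |β| := le_add_of_nonneg_right (by positivity)
  rw [mul_min_of_nonneg _ _ (by positivity)]
  refine le_min ?_ ?_
  · have hpow : (c / y) ^ ((k : ℝ) * lam) = (y ^ k * (1 + P ^ k * |β|)) ^ (-lam) := by
      rw [Real.rpow_mul hx.le, Real.rpow_natCast, div_pow, ← hck, Real.rpow_neg (by positivity),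
        ← Real.inv_rpow (by positivity)]
      congr 1
      field_simp
    calc y * P * (1 + (y * P) ^ k * |β|) ^ (-lam)
        ≤ y * P * (y ^ k * (1 + P ^ k * |β|)) ^ (-lam) := by
          refine mul_le_mul_of_nonneg_left (Real.rpow_le_rpow_of_nonpos (by positivity) ?_
            (by linarith)) (by positivity)
          rw [hexpand]
          nlinarith [pow_pos hy0 k]
      _ = P * c * (c / y) ^ ((k : ℝ) * lam - 1) := by
          rw [Real.rpow_sub_one hx.ne', hpow]
          field_simp
  · calc y * P * (1 + (y * P) ^ k * |β|) ^ (-lam) ≤ y * P :=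
          mul_le_of_le_one_right (by positivity)
            (Real.rpow_le_one_of_one_le_of_nonpos hbase (by linarith))
      _ = P * c * (c / y)⁻¹ := by field_simp

theorem stmt5 (k : ℕ) (hk : 2 ≤ k) (lam : ℝ) (hlam1 : 1 / (k : ℝ) < lam) :
    ∃ C : ℝ, 0 < C ∧ ∀ P : ℝ, 0 < P → ∀ J : ℕ, (2 : ℝ) ^ J ≤ P → ∀ β : ℝ,
      ∑ j ∈ Finset.range (J + 1),
        ((2 : ℝ) ^ (-(j : ℝ)) * P) *
          (1 + ((2 : ℝ) ^ (-(j : ℝ)) * P) ^ k * |β|) ^ (-lam)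
        ≤ C * P * (1 + P ^ k * |β|) ^ (-(1 : ℝ) / k) := by
  have hk0 : (0 : ℝ) < k := by exact_mod_cast (by omega : 0 < k)
  have hlam0 : 0 ≤ lam := ((one_div_pos.2 hk0).trans hlam1).le
  have ha : 0 < (k : ℝ) * lam - 1 := sub_pos.2 ((div_lt_iff₀' hk0).1 hlam1)
  have hq : 1 < (2 : ℝ) ^ ((k : ℝ) * lam - 1) := Real.one_lt_rpow one_lt_two ha
  refine ⟨2 ^ ((k : ℝ) * lam - 1) / (2 ^ ((k : ℝ) * lam - 1) - 1) + 2 / (2 - 1),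
    by have := sub_pos.2 hq; positivity, ?_⟩
  intro P hP J _ β
  set c := (1 + P ^ k * |β|) ^ (-(1 : ℝ) / k)
  have hc : 0 < c := by positivity
  have hck : (c ^ k)⁻¹ = 1 + P ^ k * |β| := by
    rw [← Real.rpow_natCast, ← Real.rpow_mul (by positivity), div_mul_cancel₀ _ hk0.ne',
      Real.rpow_neg_one, inv_inv]
  have hterm (j : ℕ) : (2 : ℝ) ^ (-(j : ℝ)) * P * (1 + ((2 : ℝ) ^ (-(j : ℝ)) * P) ^ k * |β|) ^ (-lam)
      ≤ P * c * min ((c * 2 ^ j) ^ ((k : ℝ) * lam - 1)) (c * 2 ^ j)⁻¹ := by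
    have hy : c / (2 : ℝ) ^ (-(j : ℝ)) = c * 2 ^ j := by
      rw [Real.rpow_neg zero_le_two, Real.rpow_natCast, div_inv_eq_mul]
    simpa only [hy] using mul_one_add_pow_mul_rpow_neg_le hlam0 hP.le (by positivity)
      (Real.rpow_le_one_of_one_le_of_nonpos one_le_two (neg_nonpos.2 j.cast_nonneg)) hc hck
  calc _ ≤ ∑ j ∈ range (J + 1), P * c * min ((c * 2 ^ j) ^ ((k : ℝ) * lam - 1)) (c * 2 ^ j)⁻¹ :=
        sum_le_sum fun j _ => hterm j
    _ = P * c * ∑ j ∈ range (J + 1), min ((c * 2 ^ j) ^ ((k : ℝ) * lam - 1)) (c * 2 ^ j)⁻¹ :=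
        (mul_sum _ _ _).symm
    _ ≤ P * c * (2 ^ ((k : ℝ) * lam - 1) / (2 ^ ((k : ℝ) * lam - 1) - 1) + 2 / (2 - 1)) := by
        gcongr
        exact sum_range_min_rpow_inv_le one_lt_two ha hc _
    _ = _ := by ring
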